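/- For every n, let π(n) be the set of all 3-clauses over variables x1,…,xn, let z_c be a fresh variable for each c ∈ π(n), and let Ψ_n = ∃x1⋯∃xn ⋀_{c∈π(n)} (c ∨ ¬z_c). Then for every 3CNF formula φ = c1 ∧ ⋯ ∧ ck with clauses from π(n), φ is satisfiable if and only if the assignment M_φ = {z_{c1},…,z_{ck}} (setting z_{ci} true and all other z_c false) is a model of Ψ_n. -/

import Mathlib

/-! ### Machine model: deterministic single-tape Turing machines,
with explicit time and space usage. -/

structure STM (σ : Type) where
  Q : Type
  qFin : Fintype Q
  init : Q
  /-- Transition function: `none` means halt; otherwise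
  (new state, written symbol (`none` = blank), move-right?). -/
  δ : Q → Option σ → Option (Q × Option σ × Bool)

namespace STM

variable {σ : Type}

structure Cfg (M : STM σ) where
  q : M.Q
  head : ℕ
  tape : ℕ → Option σ

def initCfg (M : STM σ) (x : List σ) : M.Cfg :=
  ⟨M.init, 0, fun i => x[i]?⟩

def step (M : STM σ) (c : M.Cfg) : Option M.Cfg :=
  (M.δ c.q (c.tape c.head)).map fun t =>
    ⟨t.1, if t.2.2 then c.head + 1 else c.head - 1,
      fun i => if i = c.head then t.2.1 else c.tape i⟩

def step1 (M : STM σ) (c : M.Cfg) : M.Cfg := (M.step c).getD c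

def run (M : STM σ) (n : ℕ) (c : M.Cfg) : M.Cfg := M.step1^[n] c

def Halted (M : STM σ) (c : M.Cfg) : Prop := M.step c = none

/-- The tape holds exactly the string `l`, followed by blanks. -/
def Represents (t : ℕ → Option σ) (l : List σ) : Prop := ∀ i, t i = l[i]?

/-- `M` computes `f` within time bound `T` (with respect to injections of the
input and output alphabets into the tape alphabet). -/
def ComputesInTime {α β : Type} (M : STM σ) (ια : α → σ) (ιβ : β → σ)
    (f : List α → List β) (T : ℕ → ℕ) : Prop :=
  ∀ x : List α, ∃ n, n ≤ T x.length ∧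
    M.Halted (M.run n (M.initCfg (x.map ια))) ∧
    Represents (M.run n (M.initCfg (x.map ια))).tape ((f x).map ιβ)

/-- `M` computes `f` within space bound `S`: the computation halts with the
correct output and the head never leaves the first `S |x|` cells. -/
def ComputesInSpace {α β : Type} (M : STM σ) (ια : α → σ) (ιβ : β → σ)
    (f : List α → List β) (S : ℕ → ℕ) : Prop :=
  ∀ x : List α, ∃ n,
    M.Halted (M.run n (M.initCfg (x.map ια))) ∧
    Represents (M.run n (M.initCfg (x.map ια))).tape ((f x).map ιβ) ∧
    ∀ m, m ≤ n → (M.run m (M.initCfg (x.map ια))).head ≤ S x.length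

end STM

/-- `f` is computable in polynomial time (by a deterministic Turing machine with
some finite tape alphabet). -/
def PolyTimeFun {α β : Type} (f : List α → List β) : Prop :=
  ∃ (σ : Type) (_ : Fintype σ) (ια : α → σ) (ιβ : β → σ) (M : STM σ) (p : Polynomial ℕ),
    Function.Injective ια ∧ Function.Injective ιβ ∧
    M.ComputesInTime ια ιβ f (fun n => p.eval n)

/-- `f` is computable in polynomial space. -/
def PolySpaceFun {α β : Type} (f : List α → List β) : Prop :=
  ∃ (σ : Type) (_ : Fintype σ) (ια : α → σ) (ιβ : β → σ) (M : STM σ) (p : Polynomial ℕ),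
    Function.Injective ια ∧ Function.Injective ιβ ∧
    M.ComputesInSpace ια ιβ f (fun n => p.eval n)

/-- Standard encoding of a pair of strings over a combined alphabet. -/
def encodePair {α β : Type} (x : List α) (y : List β) : List (α ⊕ β) :=
  x.map Sum.inl ++ y.map Sum.inr

/-- A two-argument function is polynomial-time computable if the corresponding
function on encoded pairs is. -/
def PolyTimeFun₂ {α β γ : Type} (g : List α → List β → List γ) : Prop :=
  ∃ g' : List (α ⊕ β) → List γ, PolyTimeFun g' ∧ ∀ x y, g' (encodePair x y) = g x y

/-- A language is polynomial-time decidable. -/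
def PolyTimeDecidable {α : Type} (L : Set (List α)) : Prop :=
  ∃ f : List α → List Bool, PolyTimeFun f ∧ ∀ x, x ∈ L ↔ f x = [true]

/-- `L` is in NP: membership has polynomial-size certificates verifiable in
polynomial time. -/
def InNP {α : Type} (L : Set (List α)) : Prop :=
  ∃ (p : Polynomial ℕ) (V : Set (List (α ⊕ Bool))), PolyTimeDecidable V ∧
    ∀ x, x ∈ L ↔ ∃ w : List Bool, w.length ≤ p.eval x.length ∧ encodePair x w ∈ V

def InCoNP {α : Type} (L : Set (List α)) : Prop := InNP Lᶜ

/-- Polynomial-time many-one reducibility of languages. -/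
def ManyOneRed {α β : Type} (L₁ : Set (List α)) (L₂ : Set (List β)) : Prop :=
  ∃ f : List α → List β, PolyTimeFun f ∧ ∀ x, x ∈ L₁ ↔ f x ∈ L₂

def NPComplete {α : Type} (L : Set (List α)) : Prop :=
  InNP L ∧ ∀ (β : Type) (L' : Set (List β)), InNP L' → ManyOneRed L' L

def CoNPComplete {α : Type} (L : Set (List α)) : Prop :=
  InCoNP L ∧ ∀ (β : Type) (L' : Set (List β)), InCoNP L' → ManyOneRed L' L

def NPneqCoNP : Prop := ¬ ∀ (α : Type) (L : Set (List α)), InNP L ↔ InCoNP L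

/-- `L` is in coNP/poly: a coNP predicate together with polynomial-size advice
depending only on the input length decides `L`. -/
def InCoNPpoly {α : Type} (L : Set (List α)) : Prop :=
  ∃ (p : Polynomial ℕ) (adv : ℕ → List Bool) (V : Set (List (α ⊕ Bool))),
    InCoNP V ∧ (∀ n, (adv n).length ≤ p.eval n) ∧
    ∀ x, x ∈ L ↔ encodePair x (adv x.length) ∈ V

def NPnotSubCoNPpoly : Prop := ¬ ∀ (α : Type) (L : Set (List α)), InNP L → InCoNPpoly L

/-! ### Logic systems and model-equivalent reductions -/

/-- A logic system `(Γ, Δ, T, S, R)` (Definition 1): theories are strings over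
`Γ`, interpretations are strings over `Δ`, and `R` is the satisfaction
relation. -/
structure LogicSystem (Γ Δ : Type) where
  T : Set (List Γ)
  S : Set (List Δ)
  R : List Γ → List Δ → Prop

namespace LogicSystem

variable {Γ Δ : Type}

/-- The set of `R`-models of a theory `t`. -/
def Mod (L : LogicSystem Γ Δ) (t : List Γ) : Set (List Δ) := {w | w ∈ L.S ∧ L.R t w}

/-- A poly-size system: `R t w` implies `|w| = p (|t|)` for a fixed polynomial. -/
def PolySize (L : LogicSystem Γ Δ) : Prop :=
  ∃ p : Polynomial ℕ, ∀ t w, L.R t w → w.length = p.eval t.length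

/-- The satisfaction relation `R`, as a language of encoded pairs. -/
def RelLang (L : LogicSystem Γ Δ) : Set (List (Γ ⊕ Δ)) :=
  {l | ∃ t w, l = encodePair t w ∧ L.R t w}

/-- The model-checking problem: given a theory `t ∈ T` and an interpretation
`w ∈ S`, does `w` satisfy `t`? -/
def ModelCheckLang (L : LogicSystem Γ Δ) : Set (List (Γ ⊕ Δ)) :=
  {l | ∃ t w, l = encodePair t w ∧ t ∈ L.T ∧ w ∈ L.S ∧ L.R t w}

/-- The model-existence problem: `{t ∈ T : Mod_R(t) ≠ ∅}`. -/
def ModelExistLang (L : LogicSystem Γ Δ) : Set (List Γ) :=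
  {t | t ∈ L.T ∧ (L.Mod t).Nonempty}

end LogicSystem

/-- Poly-time model-equivalent reduction (Definition 2): a poly-time translation
`f` of theories, and a poly-time map `g` such that `g t` is a bijection from the
models of `t` onto the models of `f t`. -/
def PtimeModelEquivRed {Γ₁ Δ₁ Γ₂ Δ₂ : Type}
    (L₁ : LogicSystem Γ₁ Δ₁) (L₂ : LogicSystem Γ₂ Δ₂) : Prop :=
  ∃ (f : List Γ₁ → List Γ₂) (g : List Γ₁ → List Δ₁ → List Δ₂),
    PolyTimeFun f ∧ PolyTimeFun₂ g ∧
    ∀ t ∈ L₁.T, f t ∈ L₂.T ∧ Set.BijOn (g t) (L₁.Mod t) (L₂.Mod (f t))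

/-- Poly-space model-equivalent reduction: as above, but `f` need only be
computable in polynomial space. -/
def PspaceModelEquivRed {Γ₁ Δ₁ Γ₂ Δ₂ : Type}
    (L₁ : LogicSystem Γ₁ Δ₁) (L₂ : LogicSystem Γ₂ Δ₂) : Prop :=
  ∃ (f : List Γ₁ → List Γ₂) (g : List Γ₁ → List Δ₁ → List Δ₂),
    PolySpaceFun f ∧ PolyTimeFun₂ g ∧
    ∀ t ∈ L₁.T, f t ∈ L₂.T ∧ Set.BijOn (g t) (L₁.Mod t) (L₂.Mod (f t))

/-! ### Propositional formulas and existentially quantified propositional formulas -/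

inductive PropForm where
  | tru : PropForm
  | fls : PropForm
  | var (n : ℕ) : PropForm
  | neg (φ : PropForm) : PropForm
  | and (φ ψ : PropForm) : PropForm
  | or (φ ψ : PropForm) : PropForm
  deriving DecidableEq

namespace PropForm

def eval (v : ℕ → Bool) : PropForm → Bool
  | tru => true
  | fls => false
  | var n => v n
  | neg φ => !(eval v φ)
  | and φ ψ => eval v φ && eval v ψ
  | or φ ψ => eval v φ || eval v ψ

def vars : PropForm → Finset ℕ
  | tru => ∅
  | fls => ∅
  | var n => {n}
  | neg φ => vars φ
  | and φ ψ => vars φ ∪ vars ψ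
  | or φ ψ => vars φ ∪ vars ψ

def iff (φ ψ : PropForm) : PropForm := or (and φ ψ) (and (neg φ) (neg ψ))

def conj : List PropForm → PropForm
  | [] => tru
  | φ :: l => and φ (conj l)

def disj : List PropForm → PropForm
  | [] => fls
  | φ :: l => or φ (disj l)

/-- A formula is satisfiable if some assignment makes it true. -/
def Satisfiable (φ : PropForm) : Prop := ∃ v : ℕ → Bool, φ.eval v = true

/-- A model of `φ`, viewed as the set of variables assigned `true`. -/
def IsModel (φ : PropForm) (M : Finset ℕ) : Prop :=
  M ⊆ φ.vars ∧ φ.eval (fun i => decide (i ∈ M)) = true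

/-- A minimal model: no proper subset is a model. -/
def IsMinModel (φ : PropForm) (M : Finset ℕ) : Prop :=
  φ.IsModel M ∧ ∀ M', M' ⊂ M → ¬ φ.IsModel M'

end PropForm

/-- An existentially quantified propositional formula `∃ bound, matrix`
(free variables allowed). -/
structure EPF where
  bound : Finset ℕ
  matrix : PropForm

namespace EPF

def free (Φ : EPF) : Finset ℕ := Φ.matrix.vars \ Φ.bound

/-- Satisfaction of `Φ` by an assignment of its free variables. -/
def Sat (Φ : EPF) (v : ℕ → Bool) : Prop :=
  ∃ u : ℕ → Bool, (∀ i ∈ Φ.free, u i = v i) ∧ Φ.matrix.eval u = true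

/-- A model of `Φ`: a subset of the free variables whose characteristic
assignment satisfies `Φ`. -/
def IsModel (Φ : EPF) (M : Finset ℕ) : Prop :=
  M ⊆ Φ.free ∧ Φ.Sat (fun i => decide (i ∈ M))

def IsMinModel (Φ : EPF) (M : Finset ℕ) : Prop :=
  Φ.IsModel M ∧ ∀ M', M' ⊂ M → ¬ Φ.IsModel M'

end EPF

/-! ### String encodings of formulas, assignments, and the concrete systems -/

inductive PFAlpha where
  | x | bar | lnot | land | lor | exq | lp | rp | top | bot
  deriving DecidableEq

instance : Fintype PFAlpha :=
  ⟨⟨↑[PFAlpha.x, .bar, .lnot, .land, .lor, .exq, .lp, .rp, .top, .bot], by decide⟩,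
    by intro a; cases a <;> decide⟩

def encodeVar (n : ℕ) : List PFAlpha := PFAlpha.x :: List.replicate (n + 1) PFAlpha.bar

def PropForm.encode : PropForm → List PFAlpha
  | .tru => [.top]
  | .fls => [.bot]
  | .var n => encodeVar n
  | .neg φ => .lnot :: φ.encode
  | .and φ ψ => .lp :: (φ.encode ++ .land :: (ψ.encode ++ [.rp]))
  | .or φ ψ => .lp :: (φ.encode ++ .lor :: (ψ.encode ++ [.rp]))

def EPF.encode (Φ : EPF) : List PFAlpha :=
  ((Φ.bound.sort (· ≤ ·)).map fun i => PFAlpha.exq :: encodeVar i).flatten ++ Φ.matrix.encode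

/-- Decode a `{0,1}`-string as a subset of a (sorted) finite set of variables. -/
def decodeM (F : Finset ℕ) (w : List Bool) : Finset ℕ :=
  ((((F.sort (· ≤ ·)).zip w).filter fun p => p.2).map fun p => p.1).toFinset

def SatRel (t : List PFAlpha) (w : List Bool) : Prop :=
  ∃ φ : PropForm, t = φ.encode ∧ w.length = φ.vars.card ∧ φ.IsModel (decodeM φ.vars w)

def MinSatRel (t : List PFAlpha) (w : List Bool) : Prop :=
  ∃ φ : PropForm, t = φ.encode ∧ w.length = φ.vars.card ∧ φ.IsMinModel (decodeM φ.vars w)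

def FSatRel (t : List PFAlpha) (w : List Bool) : Prop :=
  ∃ Φ : EPF, t = Φ.encode ∧ w.length = Φ.free.card ∧ Φ.IsModel (decodeM Φ.free w)

def FMinSatRel (t : List PFAlpha) (w : List Bool) : Prop :=
  ∃ Φ : EPF, t = Φ.encode ∧ w.length = Φ.free.card ∧ Φ.IsMinModel (decodeM Φ.free w)

/-- The system (PF, TA, Sat). -/
def SysSat : LogicSystem PFAlpha Bool :=
  ⟨{t | ∃ φ : PropForm, t = φ.encode}, Set.univ, SatRel⟩

/-- The system (PF, TA, MinSat). -/
def SysMinSat : LogicSystem PFAlpha Bool :=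
  ⟨{t | ∃ φ : PropForm, t = φ.encode}, Set.univ, MinSatRel⟩

/-- The system (∃PF, TA, FSat). -/
def SysFSat : LogicSystem PFAlpha Bool :=
  ⟨{t | ∃ Φ : EPF, t = Φ.encode}, Set.univ, FSatRel⟩

/-- The system (∃PF, TA, FMinSat). -/
def SysFMinSat : LogicSystem PFAlpha Bool :=
  ⟨{t | ∃ Φ : EPF, t = Φ.encode}, Set.univ, FMinSatRel⟩

/-! ### 3-clauses over variables `x₁,…,xₙ`, the formulas `Ψₙ` and `ψₙ` -/

/-- A 3-clause over `n` variables: up to three literals. -/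
def Cl (n : ℕ) : Type := Fin 3 → Option (Fin n × Bool)

instance (n : ℕ) : Fintype (Cl n) := inferInstanceAs (Fintype (Fin 3 → Option (Fin n × Bool)))
instance (n : ℕ) : DecidableEq (Cl n) := inferInstanceAs (DecidableEq (Fin 3 → Option (Fin n × Bool)))

def litForm {n : ℕ} (l : Fin n × Bool) : PropForm :=
  if l.2 then .var l.1.1 else .neg (.var l.1.1)

/-- The 3-clause `c` as a propositional formula (a disjunction of literals). -/
def clauseForm {n : ℕ} (c : Cl n) : PropForm :=
  PropForm.disj (((List.finRange 3).filterMap c).map litForm)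

/-- The list of all 3-clauses over `n` variables (the set `π(n)`). -/
noncomputable def clList (n : ℕ) : List (Cl n) := (Finset.univ : Finset (Cl n)).toList

/-- An index for each 3-clause. -/
noncomputable def clIdx {n : ℕ} (c : Cl n) : ℕ := (Fintype.equivFin (Cl n) c : ℕ)

/-- The variable `z_c`. -/
noncomputable def zIdx (n : ℕ) (c : Cl n) : ℕ := n + clIdx c

/-- The variable `z'_c`. -/
noncomputable def z'Idx (n : ℕ) (c : Cl n) : ℕ := n + Fintype.card (Cl n) + clIdx c

/-- The variable `y`. -/
def yIdx (n : ℕ) : ℕ := n + 2 * Fintype.card (Cl n)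

/-- `Ψₙ = ∃x₁⋯∃xₙ ⋀_{c ∈ π(n)} (c ∨ ¬z_c)`. -/
noncomputable def Psi (n : ℕ) : EPF :=
  ⟨Finset.range n,
    PropForm.conj ((clList n).map fun c =>
      .or (clauseForm c) (.neg (.var (zIdx n c))))⟩

/-- A 3CNF formula `c₁ ∧ ⋯ ∧ c_k` with clauses from `π(n)`. -/
def phiForm {n : ℕ} (cs : List (Cl n)) : PropForm := PropForm.conj (cs.map clauseForm)

/-- The assignment `M_φ = {z_{c₁},…,z_{c_k}}` for `φ = c₁ ∧ ⋯ ∧ c_k`. -/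
noncomputable def Mphi {n : ℕ} (cs : List (Cl n)) : Finset ℕ :=
  Finset.image (zIdx n) cs.toFinset

/-- `ψₙ = ((¬y ∧ ⋀_{c}(c ∨ ¬z_c)) ∨ (y ∧ x₁ ∧ ⋯ ∧ xₙ)) ∧ ⋀_c (z_c ↔ ¬z'_c)`. -/
noncomputable def psi (n : ℕ) : PropForm :=
  .and
    (.or
      (.and (.neg (.var (yIdx n)))
        (PropForm.conj ((clList n).map fun c =>
          .or (clauseForm c) (.neg (.var (zIdx n c))))))
      (.and (.var (yIdx n)) (PropForm.conj ((List.range n).map PropForm.var))))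
    (PropForm.conj ((clList n).map fun c =>
      PropForm.iff (.var (zIdx n c)) (.neg (.var (z'Idx n c)))))

/-- `M_φ = {y, x₁,…,xₙ} ∪ {z_c : c ∈ φ} ∪ {z'_c : c ∉ φ}`. -/
noncomputable def Mphi' {n : ℕ} (cs : List (Cl n)) : Finset ℕ :=
  insert (yIdx n)
    (Finset.range n ∪ Finset.image (zIdx n) cs.toFinset ∪
      Finset.image (z'Idx n) (Finset.univ \ cs.toFinset))

/-! Since `z_c` occurs only in the conjunct `c ∨ ¬z_c`, an assignment of the `z_c` satisfies
`Ψₙ` exactly when one assignment of `x₁,…,xₙ` satisfies all clauses `c` with `z_c` true;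
for `M_φ` these are the clauses of `φ`. -/

namespace PropForm

theorem eval_congr {φ : PropForm} {v w : ℕ → Bool} (h : ∀ i ∈ φ.vars, v i = w i) :
    φ.eval v = φ.eval w := by
  induction φ <;> simp_all [eval, vars]

theorem eval_conj_eq_true {l : List PropForm} {v : ℕ → Bool} :
    (conj l).eval v = true ↔ ∀ φ ∈ l, φ.eval v = true := by
  induction l <;> simp_all [conj, eval]

theorem mem_vars_conj {l : List PropForm} {i : ℕ} :
    i ∈ (conj l).vars ↔ ∃ φ ∈ l, i ∈ φ.vars := by
  induction l <;> simp_all [conj, vars]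

theorem mem_vars_disj {l : List PropForm} {i : ℕ} :
    i ∈ (disj l).vars ↔ ∃ φ ∈ l, i ∈ φ.vars := by
  induction l <;> simp_all [disj, vars]

end PropForm

theorem lt_of_mem_vars_clauseForm {n : ℕ} {c : Cl n} {i : ℕ} (hi : i ∈ (clauseForm c).vars) :
    i < n := by
  obtain ⟨_, hφ, hiφ⟩ := PropForm.mem_vars_disj.mp hi
  obtain ⟨⟨_, b⟩, _, rfl⟩ := List.mem_map.mp hφ
  cases b <;> simp_all [litForm, PropForm.vars]

theorem mem_clList {n : ℕ} (c : Cl n) : c ∈ clList n := by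
  simp [clList]

theorem le_zIdx (n : ℕ) (c : Cl n) : n ≤ zIdx n c :=
  Nat.le_add_right n _

theorem zIdx_injective (n : ℕ) : Function.Injective (zIdx n) := fun _ _ h =>
  (Fintype.equivFin (Cl n)).injective (Fin.ext (Nat.add_left_cancel h))

theorem zIdx_mem_Mphi_iff {n : ℕ} {cs : List (Cl n)} {c : Cl n} :
    zIdx n c ∈ Mphi cs ↔ c ∈ cs := by
  simp [Mphi, (zIdx_injective n).mem_finset_image]

theorem eval_Psi_matrix_eq_true {n : ℕ} {u : ℕ → Bool} :
    (Psi n).matrix.eval u = true ↔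
      ∀ c : Cl n, u (zIdx n c) = true → (clauseForm c).eval u = true := by
  simp only [Psi, PropForm.eval_conj_eq_true, List.forall_mem_map, PropForm.eval,
    Bool.or_eq_true, Bool.not_eq_true', mem_clList, true_implies]
  exact forall_congr' fun c => by cases u (zIdx n c) <;> simp

theorem le_of_mem_free_Psi {n i : ℕ} (hi : i ∈ (Psi n).free) : n ≤ i := by
  simpa [EPF.free, Psi] using (Finset.mem_sdiff.mp hi).2

theorem zIdx_mem_free_Psi (n : ℕ) (c : Cl n) : zIdx n c ∈ (Psi n).free := by
  refine Finset.mem_sdiff.mpr ⟨PropForm.mem_vars_conj.mpr ?_, ?_⟩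
  · exact ⟨_, List.mem_map_of_mem (mem_clList c), by simp [PropForm.vars]⟩
  · simpa [Psi] using le_zIdx n c

theorem Mphi_subset_free_Psi {n : ℕ} (cs : List (Cl n)) : Mphi cs ⊆ (Psi n).free := by
  intro i hi
  obtain ⟨c, _, rfl⟩ := Finset.mem_image.mp hi
  exact zIdx_mem_free_Psi n c

theorem Psi_sat_iff {n : ℕ} {w : ℕ → Bool} :
    (Psi n).Sat w ↔
      ∃ v : ℕ → Bool, ∀ c : Cl n, w (zIdx n c) = true → (clauseForm c).eval v = true := by
  constructor
  · rintro ⟨u, hfree, hu⟩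
    refine ⟨u, fun c hc => eval_Psi_matrix_eq_true.mp hu c ?_⟩
    rwa [hfree _ (zIdx_mem_free_Psi n c)]
  · rintro ⟨v, hv⟩
    -- the clauses only see `x₁,…,xₙ` and the free variables are the indices `≥ n`
    let u : ℕ → Bool := fun i => if i < n then v i else w i
    have hclause (c : Cl n) : (clauseForm c).eval u = (clauseForm c).eval v :=
      PropForm.eval_congr fun i hi => if_pos (lt_of_mem_vars_clauseForm hi)
    refine ⟨u, fun i hi => if_neg (le_of_mem_free_Psi hi).not_gt, ?_⟩
    refine eval_Psi_matrix_eq_true.mpr fun c hc => (hclause c).trans (hv c ?_)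
    simpa [u, (le_zIdx n c).not_gt] using hc

/-- A 3CNF formula `φ = c₁ ∧ ⋯ ∧ c_k` with clauses from
`π(n)` is satisfiable iff `M_φ = {z_{c₁},…,z_{c_k}}` is a model of
`Ψₙ = ∃x₁⋯∃xₙ ⋀_{c ∈ π(n)} (c ∨ ¬z_c)`. -/
theorem sat_iff_model_Psi (n : ℕ) (cs : List (Cl n)) :
    (phiForm cs).Satisfiable ↔ (Psi n).IsModel (Mphi cs) := by
  simp only [EPF.IsModel, Mphi_subset_free_Psi, true_and, Psi_sat_iff, decide_eq_true_eq,
    zIdx_mem_Mphi_iff, PropForm.Satisfiable, phiForm, PropForm.eval_conj_eq_true,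
    List.forall_mem_map]
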